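/- Let X be an ω-category with X_n = A[I] free, and let u, u', u'', v, v', v'' be (n+1)-cells of X. Whenever the left-hand sides are defined: (1) u •_k (v' ∘_r v'') = (u •_k v') ∘_r v'' for k ≤ n; (2) (u' ∘_r u'') •_k v = (u' •_k v) ∘_r u'' for k < n. -/

import Mathlib

/-- A globular higher-categorical cell structure: cells of all dimensions,
with domain (`src`), codomain (`tgt`), identity (`ide`) and, for each `k`,
binary composition at level `k` (a total operation; the laws below are
conditioned on the definedness conditions). For `u` of dimension `0`, we set
`src u = tgt u = u`. -/
structure OmegaCat : Type 1 where
  cell : Type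
  dim : cell → ℕ
  src : cell → cell
  tgt : cell → cell
  ide : cell → cell
  comp : ℕ → cell → cell → cell

namespace OmegaCat

/-- The iterated domain `d^{(k)} u` of a cell `u` of dimension `≥ k`. -/
def srcAt (X : OmegaCat) (k : ℕ) (u : X.cell) : X.cell := X.src^[X.dim u - k] u

/-- The iterated codomain `c^{(k)} u` of a cell `u` of dimension `≥ k`. -/
def tgtAt (X : OmegaCat) (k : ℕ) (u : X.cell) : X.cell := X.tgt^[X.dim u - k] u

/-- The iterated identity `1^{(m)}_u` over a cell `u` of dimension `≤ m`. -/
def idePad (X : OmegaCat) (m : ℕ) (u : X.cell) : X.cell := X.ide^[m - X.dim u] u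

/-- Composability of two cells at level `k`: equal dimensions `> k` and
matching iterated domain/codomain at level `k`. -/
def Composable (X : OmegaCat) (k : ℕ) (u v : X.cell) : Prop :=
  X.dim u = X.dim v ∧ k < X.dim u ∧ X.srcAt k u = X.tgtAt k v

/-- Whiskering composition of cells of possibly different dimensions: the
lower-dimensional argument is padded with iterated identities. -/
def wcomp (X : OmegaCat) (k : ℕ) (u v : X.cell) : X.cell :=
  X.comp k (X.idePad (max (X.dim u) (X.dim v)) u)
           (X.idePad (max (X.dim u) (X.dim v)) v)

/-- Parallelism of two cells (any two 0-cells are parallel). -/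
def Par (X : OmegaCat) (a b : X.cell) : Prop :=
  X.dim a = X.dim b ∧ (X.dim a = 0 ∨ (X.src a = X.src b ∧ X.tgt a = X.tgt b))

end OmegaCat

/-- The laws of a strict ω-category: globularity, behaviour of dimensions,
domains and codomains under the operations, associativity, exchange and
identity laws for the compositions. -/
structure OmegaCat.Laws (X : OmegaCat) : Prop where
  src_dim0 : ∀ u, X.dim u = 0 → X.src u = u ∧ X.tgt u = u
  dim_src : ∀ u, 0 < X.dim u → X.dim (X.src u) = X.dim u - 1
  dim_tgt : ∀ u, 0 < X.dim u → X.dim (X.tgt u) = X.dim u - 1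
  src_src : ∀ u, 1 < X.dim u → X.src (X.src u) = X.src (X.tgt u)
  tgt_src : ∀ u, 1 < X.dim u → X.tgt (X.src u) = X.tgt (X.tgt u)
  dim_ide : ∀ u, X.dim (X.ide u) = X.dim u + 1
  src_ide : ∀ u, X.src (X.ide u) = u
  tgt_ide : ∀ u, X.tgt (X.ide u) = u
  dim_comp : ∀ k u v, X.Composable k u v → X.dim (X.comp k u v) = X.dim u
  bd_comp_top : ∀ k u v, X.Composable k u v → k + 1 = X.dim u →
    X.src (X.comp k u v) = X.src v ∧ X.tgt (X.comp k u v) = X.tgt u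
  bd_comp : ∀ k u v, X.Composable k u v → k + 1 < X.dim u →
    X.src (X.comp k u v) = X.comp k (X.src u) (X.src v) ∧
    X.tgt (X.comp k u v) = X.comp k (X.tgt u) (X.tgt v)
  comp_assoc : ∀ k u v w, X.Composable k u v → X.Composable k v w →
    X.comp k (X.comp k u v) w = X.comp k u (X.comp k v w)
  exch : ∀ l k t t₁ s s₁, l < k →
    X.Composable k t t₁ → X.Composable k s s₁ →
    X.Composable l (X.comp k t t₁) (X.comp k s s₁) →
    X.comp l (X.comp k t t₁) (X.comp k s s₁) =
      X.comp k (X.comp l t s) (X.comp l t₁ s₁)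
  comp_id_left : ∀ k u, k < X.dim u →
    X.comp k (X.idePad (X.dim u) (X.tgtAt k u)) u = u
  comp_id_right : ∀ k u, k < X.dim u →
    X.comp k u (X.idePad (X.dim u) (X.srcAt k u)) = u
  ide_comp : ∀ k u v, X.Composable k u v →
    X.ide (X.comp k u v) = X.comp k (X.ide u) (X.ide v)

/-- `F` is (the function underlying) an ω-functor from `X` to `Z`. -/
def IsOmegaFn (X Z : OmegaCat) (F : X.cell → Z.cell) : Prop :=
  (∀ u, Z.dim (F u) = X.dim u) ∧
  (∀ u, 0 < X.dim u → Z.src (F u) = F (X.src u) ∧ Z.tgt (F u) = F (X.tgt u)) ∧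
  (∀ u, F (X.ide u) = Z.ide (F u)) ∧
  (∀ k u v, X.Composable k u v →
    Z.Composable k (F u) (F v) ∧ F (X.comp k u v) = Z.comp k (F u) (F v))

/-- `X` is an `n`-category: every cell of dimension `> n` is an identity. -/
def IsNCat (X : OmegaCat) (n : ℕ) : Prop :=
  ∀ u, n < X.dim u → ∃ v, u = X.ide v

/-- `Z` extends `X` at level `m` via `e`, i.e. `e` identifies the `m`-th
truncation of `X` with that of `Z`. -/
def ExtendsAt (Z X : OmegaCat) (m : ℕ) (e : X.cell → Z.cell) : Prop :=
  (∀ a b, X.dim a ≤ m → X.dim b ≤ m → e a = e b → a = b) ∧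
  (∀ u, Z.dim u ≤ m → ∃ a, X.dim a ≤ m ∧ e a = u) ∧
  (∀ a, X.dim a ≤ m → Z.dim (e a) = X.dim a) ∧
  (∀ a, 0 < X.dim a → X.dim a ≤ m →
    Z.src (e a) = e (X.src a) ∧ Z.tgt (e a) = e (X.tgt a)) ∧
  (∀ a, X.dim a < m → Z.ide (e a) = e (X.ide a)) ∧
  (∀ k a b, X.Composable k a b → X.dim a ≤ m →
    Z.comp k (e a) (e b) = e (X.comp k a b))

/-- The `n`-th truncation of `X` is the free extension of its `(n−1)`-th
truncation generated by the set `I` of `n`-indeterminates: every assignment of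
`I` into an ω-category `Z` extending the `(n−1)`-truncation of `X`, respecting
domains and codomains, extends uniquely to the `n`-truncation of `X`. -/
def FreeAtLevel (X : OmegaCat) (n : ℕ) (I : Set X.cell) : Prop :=
  (∀ x ∈ I, X.dim x = n) ∧
  ∀ (Z : OmegaCat), Z.Laws → ∀ (e : X.cell → Z.cell), ExtendsAt Z X (n-1) e →
    ∀ (φ : X.cell → Z.cell),
      (∀ x ∈ I, Z.dim (φ x) = n ∧ Z.src (φ x) = e (X.src x) ∧
        Z.tgt (φ x) = e (X.tgt x)) →
      ∃ G : X.cell → Z.cell,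
        ((∀ u, X.dim u ≤ n - 1 → G u = e u) ∧ (∀ x ∈ I, G x = φ x) ∧
         (∀ u, X.dim u ≤ n → Z.dim (G u) = X.dim u) ∧
         (∀ u, 0 < X.dim u → X.dim u ≤ n →
           Z.src (G u) = G (X.src u) ∧ Z.tgt (G u) = G (X.tgt u)) ∧
         (∀ k u v, X.Composable k u v → X.dim u ≤ n →
           G (X.comp k u v) = Z.comp k (G u) (G v)) ∧
         (∀ u, X.dim u < n → G (X.ide u) = Z.ide (G u))) ∧
        ∀ G' : X.cell → Z.cell,
          ((∀ u, X.dim u ≤ n - 1 → G' u = e u) ∧ (∀ x ∈ I, G' x = φ x) ∧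
           (∀ u, X.dim u ≤ n → Z.dim (G' u) = X.dim u) ∧
           (∀ u, 0 < X.dim u → X.dim u ≤ n →
             Z.src (G' u) = G' (X.src u) ∧ Z.tgt (G' u) = G' (X.tgt u)) ∧
           (∀ k u v, X.Composable k u v → X.dim u ≤ n →
             G' (X.comp k u v) = Z.comp k (G' u) (G' v)) ∧
           (∀ u, X.dim u < n → G' (X.ide u) = Z.ide (G' u))) →
          ∀ u, X.dim u ≤ n → G' u = G u
/-- Occurrence data for the `n`-cells of `X` (whose `n`-truncation is freely
generated by the `n`-indeterminates `I`): each `n`-cell `u` has a finite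
indexed set of occurrences of indeterminates, with
`⟦u •_k v⟧ = ⟦u⟧ ⊔ ⟦v⟧`, one occurrence in each indeterminate and none in
identity cells. -/
structure CellOcc (X : OmegaCat) (n : ℕ) (I : Set X.cell) where
  oI : X.cell → Finset ℕ
  oF : X.cell → ℕ → X.cell
  occ_mem : ∀ u r, r ∈ oI u → oF u r ∈ I
  occ_ind : ∀ x ∈ I, ∃ r, oI x = {r} ∧ oF x r = x
  occ_ide : ∀ u, X.dim u = n - 1 → oI (X.ide u) = ∅
  occ_comp : ∀ k u v, k < n → X.dim u = n → X.Composable k u v →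
    Disjoint (oI u) (oI v) ∧ oI (X.comp k u v) = oI u ∪ oI v ∧
    (∀ i ∈ oI u, oF (X.comp k u v) i = oF u i) ∧
    (∀ i ∈ oI v, oF (X.comp k u v) i = oF v i)

/-- Definedness of the generalized whiskering `u ▫_r v`: `u` is an `n`-cell,
`r` indexes an occurrence of the indeterminate `x = ⟨u⟩(r)` in `u`, and `v` is
a cell of dimension `≥ n` with `d^{(n−1)} v = d x` and `c^{(n−1)} v = c x`. -/
def WDef (X : OmegaCat) (n : ℕ) {I : Set X.cell} (D : CellOcc X n I)
    (u : X.cell) (r : ℕ) (v : X.cell) : Prop :=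
  X.dim u = n ∧ r ∈ D.oI u ∧ n ≤ X.dim v ∧
  X.srcAt (n-1) v = X.src (D.oF u r) ∧ X.tgtAt (n-1) v = X.tgt (D.oF u r)

/-- The characterizing conditions for the system of generalized whiskering
(replacement) operations `▫` on the `n`-cells of `X`. -/
def IsWhisk (X : OmegaCat) (n : ℕ) {I : Set X.cell} (D : CellOcc X n I)
    (rep : X.cell → ℕ → X.cell → X.cell) : Prop :=
  (∀ u r v, WDef X n D u r v →
      X.dim (rep u r v) = X.dim v ∧
      X.srcAt (n-1) (rep u r v) = X.src u ∧
      X.tgtAt (n-1) (rep u r v) = X.tgt u) ∧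
  (∀ x r v, x ∈ I → D.oI x = {r} → WDef X n D x r v → rep x r v = v) ∧
  (∀ k u u' r v, k < n → X.dim u = n → X.Composable k u u' →
     WDef X n D (X.comp k u u') r v →
     (r ∈ D.oI u → rep (X.comp k u u') r v = X.wcomp k (rep u r v) u') ∧
     (r ∈ D.oI u' → rep (X.comp k u u') r v = X.wcomp k u (rep u' r v)))

/-- Placed composition: `u ∘_r v = u •_n (du ▫_r v)`. -/
def pcomp (X : OmegaCat) (n : ℕ) (rep : X.cell → ℕ → X.cell → X.cell)
    (u : X.cell) (r : ℕ) (v : X.cell) : X.cell :=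
  X.comp n u (rep (X.src u) r v)

/-- Definedness of the placed composition of `(n+1)`-cells `u ∘_r v`:
`r` indexes an occurrence of an indeterminate `x` in `du` and `cv = x`. -/
def PDef (X : OmegaCat) (n : ℕ) {I : Set X.cell} (D : CellOcc X n I)
    (u : X.cell) (r : ℕ) (v : X.cell) : Prop :=
  X.dim u = n + 1 ∧ X.dim v = n + 1 ∧ r ∈ D.oI (X.src u) ∧
    X.tgt v = D.oF (X.src u) r


/-!
Write `u ∘_r v = u •_n w` with `w = du ▫_r v`. Both identities come from the exchange law,
applied to `u = u •_n 1_{du}` (resp. `v = v •_n 1_{dv}`), together with the whiskering rules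
`(a •_k b) ▫_r v = 1_a •_k (b ▫_r v)` or `(a ▫_r v) •_k 1_b`, according as `r` occurs in `b`
or in `a`; the case `k = n` of (1) is associativity. What makes `u •_n w` a genuine
composite is `c(du ▫_r v) = du`, which is proved by induction over the free extension
`A[I]`: the cells all of whose iterated faces satisfy it form a sub-ω-category containing
the `(n-1)`-cells and the indeterminates, so by the uniqueness half of freeness it contains
every `n`-cell.
-/

namespace OmegaCat

variable {X : OmegaCat}

/-- The dual ω-category; each statement about targets below is the dual of one about sources. -/
def op (X : OmegaCat) : OmegaCat where
  cell := X.cell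
  dim := X.dim
  src := X.tgt
  tgt := X.src
  ide := X.ide
  comp k u v := X.comp k v u

theorem op_srcAt (k : ℕ) (u : X.cell) : X.op.srcAt k u = X.tgtAt k u := rfl

theorem op_tgtAt (k : ℕ) (u : X.cell) : X.op.tgtAt k u = X.srcAt k u := rfl

theorem op_composable {k : ℕ} {u v : X.cell} :
    X.op.Composable k u v ↔ X.Composable k v u := by
  simp only [Composable, op_srcAt, op_tgtAt]
  exact ⟨fun ⟨hd, hk, h⟩ => ⟨hd.symm, hd ▸ hk, h.symm⟩,
    fun ⟨hd, hk, h⟩ => ⟨hd.symm, hd ▸ hk, h.symm⟩⟩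

theorem srcAt_of_dim_eq {k : ℕ} {u : X.cell} (h : X.dim u = k) : X.srcAt k u = u := by
  rw [srcAt, h, Nat.sub_self, Function.iterate_zero_apply]

theorem srcAt_of_dim_eq_succ {k : ℕ} {u : X.cell} (h : X.dim u = k + 1) :
    X.srcAt k u = X.src u := by
  rw [srcAt, h, Nat.add_sub_cancel_left, Function.iterate_one]

theorem tgtAt_of_dim_eq_succ {k : ℕ} {u : X.cell} (h : X.dim u = k + 1) :
    X.tgtAt k u = X.tgt u :=
  X.op.srcAt_of_dim_eq_succ h

theorem idePad_of_dim_succ_eq {m : ℕ} {u : X.cell} (h : X.dim u + 1 = m) :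
    X.idePad m u = X.ide u := by
  rw [idePad, ← h, Nat.add_sub_cancel_left, Function.iterate_one]

theorem wcomp_of_dim_succ_eq_left {k : ℕ} {u v : X.cell} (h : X.dim v + 1 = X.dim u) :
    X.wcomp k u v = X.comp k u (X.ide v) := by
  rw [wcomp, max_eq_left (by omega), idePad_of_dim_succ_eq h, idePad, Nat.sub_self,
    Function.iterate_zero_apply]

theorem wcomp_of_dim_succ_eq_right {k : ℕ} {u v : X.cell} (h : X.dim u + 1 = X.dim v) :
    X.wcomp k u v = X.comp k (X.ide u) v := by
  rw [wcomp, max_eq_right (by omega), idePad_of_dim_succ_eq h, idePad, Nat.sub_self,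
    Function.iterate_zero_apply]

namespace Laws

theorem op (hX : X.Laws) : X.op.Laws where
  src_dim0 u h := (hX.src_dim0 u h).symm
  dim_src := hX.dim_tgt
  dim_tgt := hX.dim_src
  src_src u h := (hX.tgt_src u h).symm
  tgt_src u h := (hX.src_src u h).symm
  dim_ide := hX.dim_ide
  src_ide := hX.tgt_ide
  tgt_ide := hX.src_ide
  dim_comp k u v h := (hX.dim_comp k v u (op_composable.mp h)).trans (op_composable.mp h).1
  bd_comp_top k u v h hk :=
    (hX.bd_comp_top k v u (op_composable.mp h) (hk.trans (op_composable.mp h).1.symm)).symm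
  bd_comp k u v h hk :=
    (hX.bd_comp k v u (op_composable.mp h) (hk.trans_eq (op_composable.mp h).1.symm)).symm
  comp_assoc k u v w huv hvw :=
    (hX.comp_assoc k w v u (op_composable.mp hvw) (op_composable.mp huv)).symm
  exch l k t t₁ s s₁ hlk ht hs hc :=
    hX.exch l k s₁ s t₁ t hlk (op_composable.mp hs) (op_composable.mp ht) (op_composable.mp hc)
  comp_id_left := hX.comp_id_right
  comp_id_right := hX.comp_id_left
  ide_comp k u v h := hX.ide_comp k v u (op_composable.mp h)

theorem dim_src_iterate (hX : X.Laws) {m : ℕ} {u : X.cell} (h : m ≤ X.dim u) :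
    X.dim (X.src^[m] u) = X.dim u - m := by
  induction m generalizing u with
  | zero => rfl
  | succ m ih =>
    rw [Function.iterate_succ_apply, ih (by rw [hX.dim_src u (by omega)]; omega),
      hX.dim_src u (by omega)]
    omega

theorem dim_srcAt (hX : X.Laws) {k : ℕ} {u : X.cell} (h : k ≤ X.dim u) :
    X.dim (X.srcAt k u) = k := by
  rw [srcAt, hX.dim_src_iterate (by omega)]
  omega

theorem dim_tgtAt (hX : X.Laws) {k : ℕ} {u : X.cell} (h : k ≤ X.dim u) :
    X.dim (X.tgtAt k u) = k :=
  hX.op.dim_srcAt h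

theorem dim_ide_iterate (hX : X.Laws) (j : ℕ) (u : X.cell) :
    X.dim (X.ide^[j] u) = X.dim u + j := by
  induction j with
  | zero => rfl
  | succ j ih => rw [Function.iterate_succ_apply', hX.dim_ide, ih, Nat.add_assoc]

theorem dim_idePad (hX : X.Laws) {m : ℕ} {u : X.cell} (h : X.dim u ≤ m) :
    X.dim (X.idePad m u) = m := by
  rw [idePad, hX.dim_ide_iterate]
  omega

theorem srcAt_srcAt (hX : X.Laws) {l k : ℕ} {u : X.cell} (hl : l ≤ k) (hk : k ≤ X.dim u) :
    X.srcAt l (X.srcAt k u) = X.srcAt l u := by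
  rw [srcAt, hX.dim_srcAt hk, srcAt, srcAt, ← Function.iterate_add_apply]
  congr 1
  omega

theorem tgtAt_tgtAt (hX : X.Laws) {l k : ℕ} {u : X.cell} (hl : l ≤ k) (hk : k ≤ X.dim u) :
    X.tgtAt l (X.tgtAt k u) = X.tgtAt l u :=
  hX.op.srcAt_srcAt hl hk

theorem srcAt_src (hX : X.Laws) {k : ℕ} {u : X.cell} (h : k < X.dim u) :
    X.srcAt k (X.src u) = X.srcAt k u := by
  rw [← srcAt_of_dim_eq_succ (by omega : X.dim u = X.dim u - 1 + 1),
    hX.srcAt_srcAt (by omega) (by omega)]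

theorem tgt_iterate_src (hX : X.Laws) {m : ℕ} {u : X.cell} (hm : 1 ≤ m) (h : m < X.dim u) :
    X.tgt^[m] (X.src u) = X.tgt^[m] (X.tgt u) := by
  obtain ⟨j, rfl⟩ := Nat.exists_eq_add_of_le' hm
  rw [Function.iterate_succ_apply, Function.iterate_succ_apply, hX.tgt_src u (by omega)]

theorem tgtAt_src (hX : X.Laws) {l : ℕ} {u : X.cell} (h : l + 1 < X.dim u) :
    X.tgtAt l (X.src u) = X.tgtAt l u := by
  rw [tgtAt, tgtAt, hX.dim_src u (by omega), hX.tgt_iterate_src (by omega) (by omega),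
    ← Function.iterate_succ_apply]
  congr 1
  omega

theorem tgtAt_srcAt (hX : X.Laws) {l k : ℕ} {u : X.cell} (hl : l < k) (hk : k ≤ X.dim u) :
    X.tgtAt l (X.srcAt k u) = X.tgtAt l u := by
  obtain ⟨j, hj⟩ := Nat.exists_eq_add_of_le hk
  induction j generalizing u with
  | zero => rw [srcAt, hj, Nat.add_zero, Nat.sub_self, Function.iterate_zero_apply]
  | succ j ih =>
    rw [← hX.srcAt_src (by omega), ih (by rw [hX.dim_src u (by omega)]; omega)
      (by rw [hX.dim_src u (by omega)]; omega), hX.tgtAt_src (by omega)]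

theorem srcAt_tgtAt (hX : X.Laws) {l k : ℕ} {u : X.cell} (hl : l < k) (hk : k ≤ X.dim u) :
    X.srcAt l (X.tgtAt k u) = X.srcAt l u :=
  hX.op.tgtAt_srcAt hl hk

theorem srcAt_ide (hX : X.Laws) {k : ℕ} {u : X.cell} (h : k ≤ X.dim u) :
    X.srcAt k (X.ide u) = X.srcAt k u := by
  rw [srcAt, srcAt, hX.dim_ide, show X.dim u + 1 - k = X.dim u - k + 1 by omega,
    Function.iterate_succ_apply, hX.src_ide]

theorem tgtAt_ide (hX : X.Laws) {k : ℕ} {u : X.cell} (h : k ≤ X.dim u) :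
    X.tgtAt k (X.ide u) = X.tgtAt k u :=
  hX.op.srcAt_ide h

theorem srcAt_idePad (hX : X.Laws) {k m : ℕ} {u : X.cell} (hk : k ≤ X.dim u) :
    X.srcAt k (X.idePad m u) = X.srcAt k u := by
  rw [idePad]
  induction m - X.dim u with
  | zero => rfl
  | succ j ih =>
    rw [Function.iterate_succ_apply', hX.srcAt_ide (by rw [hX.dim_ide_iterate]; omega), ih]


theorem composable_src (hX : X.Laws) {k : ℕ} {u v : X.cell} (h : X.Composable k u v)
    (hk : k + 1 < X.dim u) : X.Composable k (X.src u) (X.src v) := by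
  obtain ⟨hd, -, hb⟩ := h
  refine ⟨by rw [hX.dim_src u (by omega), hX.dim_src v (by omega), hd], by
    rw [hX.dim_src u (by omega)]; omega, ?_⟩
  rw [hX.srcAt_src (by omega), hb, hX.tgtAt_src (by omega)]

theorem composable_tgt (hX : X.Laws) {k : ℕ} {u v : X.cell} (h : X.Composable k u v)
    (hk : k + 1 < X.dim u) : X.Composable k (X.tgt u) (X.tgt v) :=
  op_composable.mp (hX.op.composable_src (op_composable.mpr h) (hk.trans_eq h.1))

theorem src_iterate_comp (hX : X.Laws) {k m : ℕ} {u v : X.cell} (h : X.Composable k u v)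
    (hm : k + m < X.dim u) :
    X.src^[m] (X.comp k u v) = X.comp k (X.src^[m] u) (X.src^[m] v) ∧
      X.Composable k (X.src^[m] u) (X.src^[m] v) := by
  induction m with
  | zero => exact ⟨rfl, h⟩
  | succ m ih =>
    obtain ⟨he, hc⟩ := ih (by omega)
    have hlt : k + 1 < X.dim (X.src^[m] u) := by rw [hX.dim_src_iterate (by omega)]; omega
    simp only [Function.iterate_succ_apply']
    exact ⟨by rw [he, (hX.bd_comp k _ _ hc hlt).1], hX.composable_src hc hlt⟩

theorem srcAt_comp (hX : X.Laws) {k : ℕ} {u v : X.cell} (h : X.Composable k u v) :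
    X.srcAt k (X.comp k u v) = X.srcAt k v := by
  obtain ⟨he, hc⟩ := hX.src_iterate_comp (m := X.dim u - (k + 1)) h (by have := h.2.1; omega)
  have hdim : X.dim (X.src^[X.dim u - (k + 1)] u) = k + 1 := by
    rw [hX.dim_src_iterate (by omega)]; have := h.2.1; omega
  have hk : X.dim u - k = X.dim u - (k + 1) + 1 := by have := h.2.1; omega
  rw [srcAt, srcAt, hX.dim_comp k u v h, ← h.1, hk, Function.iterate_succ_apply',
    Function.iterate_succ_apply', he, (hX.bd_comp_top k _ _ hc hdim.symm).1]

theorem tgtAt_comp (hX : X.Laws) {k : ℕ} {u v : X.cell} (h : X.Composable k u v) :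
    X.tgtAt k (X.comp k u v) = X.tgtAt k u :=
  hX.op.srcAt_comp (op_composable.mpr h)

theorem srcAt_comp_of_le (hX : X.Laws) {l k : ℕ} {u v : X.cell} (h : X.Composable k u v)
    (hl : l ≤ k) : X.srcAt l (X.comp k u v) = X.srcAt l v := by
  have hk := h.2.1
  rw [← hX.srcAt_srcAt hl (by rw [hX.dim_comp k u v h]; omega), hX.srcAt_comp h,
    hX.srcAt_srcAt hl (by rw [← h.1]; omega)]

theorem tgtAt_comp_of_le (hX : X.Laws) {l k : ℕ} {u v : X.cell} (h : X.Composable k u v)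
    (hl : l ≤ k) : X.tgtAt l (X.comp k u v) = X.tgtAt l u :=
  hX.op.srcAt_comp_of_le (op_composable.mpr h) hl

theorem srcAt_comp_of_lt (hX : X.Laws) {l k : ℕ} {u v : X.cell} (h : X.Composable l u v)
    (hl : l < k) (hk : k ≤ X.dim u) :
    X.srcAt k (X.comp l u v) = X.comp l (X.srcAt k u) (X.srcAt k v) := by
  rw [srcAt, srcAt, srcAt, hX.dim_comp l u v h, ← h.1,
    (hX.src_iterate_comp (m := X.dim u - k) h (by omega)).1]

theorem tgtAt_comp_of_lt (hX : X.Laws) {l k : ℕ} {u v : X.cell} (h : X.Composable l u v)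
    (hl : l < k) (hk : k ≤ X.dim u) :
    X.tgtAt k (X.comp l u v) = X.comp l (X.tgtAt k u) (X.tgtAt k v) :=
  hX.op.srcAt_comp_of_lt (op_composable.mpr h) hl (hk.trans_eq h.1)

theorem srcAt_eq_of_composable (hX : X.Laws) {l k : ℕ} {u v : X.cell}
    (h : X.Composable k u v) (hl : l < k) : X.srcAt l u = X.srcAt l v := by
  obtain ⟨hd, hk, hb⟩ := h
  rw [← hX.srcAt_srcAt hl.le hk.le, hb, hX.srcAt_tgtAt hl (by omega)]

theorem tgtAt_eq_of_composable (hX : X.Laws) {l k : ℕ} {u v : X.cell}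
    (h : X.Composable k u v) (hl : l < k) : X.tgtAt l u = X.tgtAt l v :=
  (hX.op.srcAt_eq_of_composable (op_composable.mpr h) hl).symm

theorem composable_ide (hX : X.Laws) {k : ℕ} {u v : X.cell} (h : X.Composable k u v) :
    X.Composable k (X.ide u) (X.ide v) := by
  obtain ⟨hd, hk, hb⟩ := h
  refine ⟨by rw [hX.dim_ide, hX.dim_ide, hd], by rw [hX.dim_ide]; omega, ?_⟩
  rw [hX.srcAt_ide hk.le, hX.tgtAt_ide (by omega), hb]

theorem composable_idePad_tgtAt (hX : X.Laws) {k : ℕ} {u : X.cell} (hk : k < X.dim u) :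
    X.Composable k (X.idePad (X.dim u) (X.tgtAt k u)) u := by
  have hdt := hX.dim_tgtAt hk.le
  refine ⟨hX.dim_idePad (by omega), by rw [hX.dim_idePad (by omega)]; exact hk, ?_⟩
  rw [hX.srcAt_idePad hdt.ge, srcAt_of_dim_eq hdt]

theorem composable_idePad_srcAt (hX : X.Laws) {k : ℕ} {u : X.cell} (hk : k < X.dim u) :
    X.Composable k u (X.idePad (X.dim u) (X.srcAt k u)) :=
  op_composable.mp (hX.op.composable_idePad_tgtAt hk)

theorem composable_comp_left (hX : X.Laws) {k : ℕ} {u v w : X.cell}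
    (huv : X.Composable k u v) (hvw : X.Composable k v w) :
    X.Composable k (X.comp k u v) w :=
  ⟨(hX.dim_comp k u v huv).trans (huv.1.trans hvw.1), (hX.dim_comp k u v huv).symm ▸ huv.2.1,
    (hX.srcAt_comp huv).trans hvw.2.2⟩

theorem composable_comp_right (hX : X.Laws) {k : ℕ} {u v w : X.cell}
    (huv : X.Composable k u v) (hvw : X.Composable k v w) :
    X.Composable k u (X.comp k v w) :=
  op_composable.mp (hX.op.composable_comp_left (op_composable.mpr hvw) (op_composable.mpr huv))

theorem composable_of_composable_comp (hX : X.Laws) {l k : ℕ} {t t₁ s s₁ : X.cell}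
    (hlk : l < k)
    (ht : X.Composable k t t₁) (hs : X.Composable k s s₁)
    (hc : X.Composable l (X.comp k t t₁) (X.comp k s s₁)) :
    X.Composable l t s ∧ X.Composable l t₁ s₁ := by
  have hdim : X.dim t = X.dim s := by
    rw [← hX.dim_comp k t t₁ ht, ← hX.dim_comp k s s₁ hs]; exact hc.1
  have hb : X.srcAt l t = X.tgtAt l s := by
    rw [hX.srcAt_eq_of_composable ht hlk, ← hX.srcAt_comp_of_le ht hlk.le, hc.2.2,
      hX.tgtAt_comp_of_le hs hlk.le]
  have hlt : l < X.dim t := hlk.trans ht.2.1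
  refine ⟨⟨hdim, hlt, hb⟩, ⟨by rw [← ht.1, ← hs.1, hdim], ht.1 ▸ hlt, ?_⟩⟩
  rw [← hX.srcAt_eq_of_composable ht hlk, hb, hX.tgtAt_eq_of_composable hs hlk]

theorem composable_comp_comp (hX : X.Laws) {l k : ℕ} {t t₁ s s₁ : X.cell} (hlk : l < k)
    (ht : X.Composable k t t₁) (hs : X.Composable k s s₁)
    (hts : X.Composable l t s) (hts₁ : X.Composable l t₁ s₁) :
    X.Composable k (X.comp l t s) (X.comp l t₁ s₁) := by
  have hk := ht.2.1
  refine ⟨by rw [hX.dim_comp l t s hts, hX.dim_comp l t₁ s₁ hts₁, ht.1],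
    by rw [hX.dim_comp l t s hts]; exact hk, ?_⟩
  rw [hX.srcAt_comp_of_lt hts hlk hk.le, hX.tgtAt_comp_of_lt hts₁ hlk (ht.1 ▸ hk.le), ht.2.2,
    hs.2.2]

theorem comp_ide_src (hX : X.Laws) {k : ℕ} {u : X.cell} (h : X.dim u = k + 1) :
    X.Composable k u (X.ide (X.src u)) ∧ X.comp k u (X.ide (X.src u)) = u := by
  have hpad : X.idePad (X.dim u) (X.srcAt k u) = X.ide (X.src u) := by
    rw [srcAt_of_dim_eq_succ h, idePad_of_dim_succ_eq (by rw [hX.dim_src u (by omega)]; omega)]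
  rw [← hpad]
  exact ⟨hX.composable_idePad_srcAt (by omega), hX.comp_id_right k u (by omega)⟩

theorem tgt_comp_ide (hX : X.Laws) {k : ℕ} {b c w : X.cell} (hbc : X.Composable k b c)
    (hw : X.dim w = X.dim b + 1) (htw : X.tgt w = b) :
    X.Composable k w (X.ide c) ∧ X.tgt (X.comp k w (X.ide c)) = X.comp k b c := by
  have hk := hbc.2.1
  have hd := hbc.1
  have hwc : X.Composable k w (X.ide c) := by
    refine ⟨by rw [hw, hX.dim_ide, hbc.1], by omega, ?_⟩
    rw [← hX.srcAt_tgtAt (k := X.dim b) hk (by omega), tgtAt_of_dim_eq_succ hw, htw, hbc.2.2,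
      hX.tgtAt_ide (by omega)]
  rw [(hX.bd_comp k w _ hwc (by omega)).2, htw, hX.tgt_ide]
  exact ⟨hwc, rfl⟩

theorem tgt_ide_comp (hX : X.Laws) {k : ℕ} {b c w : X.cell} (hbc : X.Composable k b c)
    (hw : X.dim w = X.dim c + 1) (htw : X.tgt w = c) :
    X.Composable k (X.ide b) w ∧ X.tgt (X.comp k (X.ide b) w) = X.comp k b c := by
  have hk := hbc.2.1
  have hd := hbc.1
  have hbw : X.Composable k (X.ide b) w := by
    refine ⟨by rw [hw, hX.dim_ide, hbc.1], by rw [hX.dim_ide]; omega, ?_⟩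
    rw [← hX.tgtAt_tgtAt (k := X.dim c) (by omega) (by omega), tgtAt_of_dim_eq_succ hw, htw,
      hX.srcAt_ide (by omega), hbc.2.2]
  rw [(hX.bd_comp k _ w hbw (by rw [hX.dim_ide]; omega)).2, htw, hX.tgt_ide]
  exact ⟨hbw, rfl⟩

end Laws

structure IsSubOmegaCat (X : OmegaCat) (P : X.cell → Prop) : Prop where
  src_mem : ∀ u, P u → P (X.src u)
  tgt_mem : ∀ u, P u → P (X.tgt u)
  ide_mem : ∀ u, P u → P (X.ide u)
  comp_mem : ∀ k u v, X.Composable k u v → P u → P v → P (X.comp k u v)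

open Classical in
/-- The composite of non-composable cells, about which the laws say nothing, is set to be the
first argument. -/
noncomputable abbrev restrict {P : X.cell → Prop} (hP : X.IsSubOmegaCat P) : OmegaCat where
  cell := {u // P u}
  dim z := X.dim z.1
  src z := ⟨X.src z.1, hP.src_mem _ z.2⟩
  tgt z := ⟨X.tgt z.1, hP.tgt_mem _ z.2⟩
  ide z := ⟨X.ide z.1, hP.ide_mem _ z.2⟩
  comp k z w :=
    if h : X.Composable k z.1 w.1 then ⟨X.comp k z.1 w.1, hP.comp_mem k _ _ h z.2 w.2⟩ else z

namespace restrict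

variable {P : X.cell → Prop} (hP : X.IsSubOmegaCat P)

theorem ext {z w : (X.restrict hP).cell} (h : z.1 = w.1) : z = w := Subtype.ext h

theorem val_src_iterate (m : ℕ) (z : (X.restrict hP).cell) :
    ((X.restrict hP).src^[m] z).1 = X.src^[m] z.1 := by
  induction m with
  | zero => rfl
  | succ m ih => rw [Function.iterate_succ_apply', Function.iterate_succ_apply', ← ih]

theorem val_tgt_iterate (m : ℕ) (z : (X.restrict hP).cell) :
    ((X.restrict hP).tgt^[m] z).1 = X.tgt^[m] z.1 := by
  induction m with
  | zero => rfl
  | succ m ih => rw [Function.iterate_succ_apply', Function.iterate_succ_apply', ← ih]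

theorem val_ide_iterate (m : ℕ) (z : (X.restrict hP).cell) :
    ((X.restrict hP).ide^[m] z).1 = X.ide^[m] z.1 := by
  induction m with
  | zero => rfl
  | succ m ih => rw [Function.iterate_succ_apply', Function.iterate_succ_apply', ← ih]

theorem val_srcAt (k : ℕ) (z : (X.restrict hP).cell) :
    ((X.restrict hP).srcAt k z).1 = X.srcAt k z.1 :=
  val_src_iterate hP _ z

theorem val_tgtAt (k : ℕ) (z : (X.restrict hP).cell) :
    ((X.restrict hP).tgtAt k z).1 = X.tgtAt k z.1 :=
  val_tgt_iterate hP _ z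

theorem val_idePad (m : ℕ) (z : (X.restrict hP).cell) :
    ((X.restrict hP).idePad m z).1 = X.idePad m z.1 :=
  val_ide_iterate hP _ z

theorem composable_iff {k : ℕ} {z w : (X.restrict hP).cell} :
    (X.restrict hP).Composable k z w ↔ X.Composable k z.1 w.1 := by
  constructor
  · rintro ⟨hd, hk, hb⟩
    exact ⟨hd, hk, by rw [← val_srcAt, hb, val_tgtAt]⟩
  · rintro ⟨hd, hk, hb⟩
    exact ⟨hd, hk, Subtype.ext (by rw [val_srcAt, hb, val_tgtAt])⟩

theorem val_comp {k : ℕ} {z w : (X.restrict hP).cell} (h : X.Composable k z.1 w.1) :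
    ((X.restrict hP).comp k z w).1 = X.comp k z.1 w.1 :=
  congrArg Subtype.val (dif_pos h)

end restrict

theorem Laws.restrict (hX : X.Laws) {P : X.cell → Prop} (hP : X.IsSubOmegaCat P) :
    (X.restrict hP).Laws where
  src_dim0 z h := ⟨Subtype.ext (hX.src_dim0 z.1 h).1, Subtype.ext (hX.src_dim0 z.1 h).2⟩
  dim_src z := hX.dim_src z.1
  dim_tgt z := hX.dim_tgt z.1
  src_src z h := Subtype.ext (hX.src_src z.1 h)
  tgt_src z h := Subtype.ext (hX.tgt_src z.1 h)
  dim_ide z := hX.dim_ide z.1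
  src_ide z := Subtype.ext (hX.src_ide z.1)
  tgt_ide z := Subtype.ext (hX.tgt_ide z.1)
  dim_comp k z w h := by
    rw [restrict.composable_iff] at h
    exact (congrArg X.dim (restrict.val_comp hP h)).trans (hX.dim_comp k z.1 w.1 h)
  bd_comp_top k z w h hk := by
    rw [restrict.composable_iff] at h
    constructor <;> apply restrict.ext hP <;> simp only [h, dite_true]
    exacts [(hX.bd_comp_top k z.1 w.1 h hk).1, (hX.bd_comp_top k z.1 w.1 h hk).2]
  bd_comp k z w h hk := by
    rw [restrict.composable_iff] at h
    constructor <;> apply restrict.ext hP <;>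
      simp only [h, hX.composable_src h hk, hX.composable_tgt h hk, dite_true]
    exacts [(hX.bd_comp k z.1 w.1 h hk).1, (hX.bd_comp k z.1 w.1 h hk).2]
  comp_assoc k z w y h₁ h₂ := by
    rw [restrict.composable_iff] at h₁ h₂
    apply restrict.ext hP
    simpa [h₁, h₂, hX.composable_comp_left h₁ h₂, hX.composable_comp_right h₁ h₂]
      using hX.comp_assoc k z.1 w.1 y.1 h₁ h₂
  exch l k t t₁ s s₁ hlk ht hs hc := by
    rw [restrict.composable_iff] at ht hs hc
    rw [restrict.val_comp hP ht, restrict.val_comp hP hs] at hc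
    obtain ⟨hts, hts₁⟩ := hX.composable_of_composable_comp hlk ht hs hc
    apply restrict.ext hP
    simpa [ht, hs, hc, hts, hts₁, hX.composable_comp_comp hlk ht hs hts hts₁]
      using hX.exch l k t.1 t₁.1 s.1 s₁.1 hlk ht hs hc
  comp_id_left k z hk := by
    apply restrict.ext hP
    simpa [restrict.val_idePad, restrict.val_tgtAt, hX.composable_idePad_tgtAt hk]
      using hX.comp_id_left k z.1 hk
  comp_id_right k z hk := by
    apply restrict.ext hP
    simpa [restrict.val_idePad, restrict.val_srcAt, hX.composable_idePad_srcAt hk]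
      using hX.comp_id_right k z.1 hk
  ide_comp k z w h := by
    rw [restrict.composable_iff] at h
    apply restrict.ext hP
    simpa [h, hX.composable_ide h] using hX.ide_comp k z.1 w.1 h

theorem src_iterate_map {X Y : OmegaCat} (hX : X.Laws) {F : X.cell → Y.cell} {n : ℕ}
    (hbd : ∀ u, 0 < X.dim u → X.dim u ≤ n →
      Y.src (F u) = F (X.src u) ∧ Y.tgt (F u) = F (X.tgt u))
    {m : ℕ} {u : X.cell} (hu : X.dim u ≤ n) (hm : m ≤ X.dim u) :
    Y.src^[m] (F u) = F (X.src^[m] u) := by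
  induction m with
  | zero => rfl
  | succ m ih =>
    have hd := hX.dim_src_iterate (u := u) (m := m) (by omega)
    rw [Function.iterate_succ_apply', ih (by omega), (hbd _ (by omega) (by omega)).1,
      ← Function.iterate_succ_apply' X.src]

theorem Composable.map {X Y : OmegaCat} (hX : X.Laws) {F : X.cell → Y.cell} {n : ℕ}
    (hdim : ∀ u, X.dim u ≤ n → Y.dim (F u) = X.dim u)
    (hbd : ∀ u, 0 < X.dim u → X.dim u ≤ n →
      Y.src (F u) = F (X.src u) ∧ Y.tgt (F u) = F (X.tgt u))
    {k : ℕ} {u v : X.cell} (h : X.Composable k u v) (hu : X.dim u ≤ n) :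
    Y.Composable k (F u) (F v) := by
  obtain ⟨hd, hk, hb⟩ := h
  have hv : X.dim v ≤ n := hd ▸ hu
  refine ⟨by rw [hdim u hu, hdim v hv, hd], by rw [hdim u hu]; exact hk, ?_⟩
  have hsrc := src_iterate_map hX hbd hu (m := X.dim u - k) (Nat.sub_le _ _)
  have htgt := src_iterate_map hX.op (Y := Y.op) (fun u h0 hn => (hbd u h0 hn).symm) hv
    (m := X.dim v - k) (Nat.sub_le _ _)
  rw [srcAt, tgtAt, hdim u hu, hdim v hv, hsrc]
  exact (congrArg F hb).trans htgt.symm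

def IsFace (X : OmegaCat) (u w : X.cell) : Prop := w = X.src u ∨ w = X.tgt u

namespace Laws

theorem eq_or_dim_succ_eq_of_isFace (hX : X.Laws) {u w : X.cell} (h : X.IsFace u w) :
    w = u ∨ X.dim w + 1 = X.dim u := by
  rcases Nat.eq_zero_or_pos (X.dim u) with h0 | h0
  · rcases h with rfl | rfl
    exacts [Or.inl (hX.src_dim0 u h0).1, Or.inl (hX.src_dim0 u h0).2]
  · rcases h with rfl | rfl
    exacts [Or.inr (by rw [hX.dim_src u h0]; omega), Or.inr (by rw [hX.dim_tgt u h0]; omega)]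

theorem eq_or_dim_lt_of_reflTransGen_isFace (hX : X.Laws) {u w : X.cell}
    (h : Relation.ReflTransGen X.IsFace u w) : w = u ∨ X.dim w < X.dim u := by
  induction h with
  | refl => exact Or.inl rfl
  | tail _ hface ih =>
    rcases hX.eq_or_dim_succ_eq_of_isFace hface with rfl | hd
    · exact ih
    · rcases ih with rfl | ih <;> omega

theorem reflTransGen_isFace_ide (hX : X.Laws) {u w : X.cell}
    (h : Relation.ReflTransGen X.IsFace (X.ide u) w) :
    w = X.ide u ∨ Relation.ReflTransGen X.IsFace u w := by
  rcases h.cases_head with rfl | ⟨c, hc, hcw⟩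
  · exact Or.inl rfl
  · rcases hc with rfl | rfl
    exacts [Or.inr (hX.src_ide u ▸ hcw), Or.inr (hX.tgt_ide u ▸ hcw)]

theorem reflTransGen_isFace_comp (hX : X.Laws) {k : ℕ} {u v w : X.cell}
    (h : X.Composable k u v) (hw : Relation.ReflTransGen X.IsFace (X.comp k u v) w) :
    Relation.ReflTransGen X.IsFace u w ∨ Relation.ReflTransGen X.IsFace v w ∨
      ∃ u' v', Relation.ReflTransGen X.IsFace u u' ∧ Relation.ReflTransGen X.IsFace v v' ∧
        X.Composable k u' v' ∧ w = X.comp k u' v' := by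
  induction hw with
  | refl => exact Or.inr (Or.inr ⟨u, v, .refl, .refl, h, rfl⟩)
  | tail _ hface ih =>
    rcases ih with hu | hv | ⟨u', v', hu, hv, hc, rfl⟩
    · exact Or.inl (hu.tail hface)
    · exact Or.inr (Or.inl (hv.tail hface))
    by_cases hk : k + 1 < X.dim u'
    · obtain ⟨hs, ht⟩ := hX.bd_comp k u' v' hc hk
      rcases hface with rfl | rfl
      · exact Or.inr (Or.inr ⟨_, _, hu.tail (Or.inl rfl), hv.tail (Or.inl rfl),
          hX.composable_src hc hk, hs⟩)
      · exact Or.inr (Or.inr ⟨_, _, hu.tail (Or.inr rfl), hv.tail (Or.inr rfl),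
          hX.composable_tgt hc hk, ht⟩)
    · obtain ⟨hs, ht⟩ := hX.bd_comp_top k u' v' hc (by have := hc.2.1; omega)
      rcases hface with rfl | rfl
      · exact Or.inr (Or.inl (hs ▸ hv.tail (Or.inl rfl)))
      · exact Or.inl (ht ▸ hu.tail (Or.inr rfl))

end Laws

end OmegaCat

/-- The conditions imposed on `G` in `FreeAtLevel`. -/
def IsFreeExtension (X Z : OmegaCat) (n : ℕ) (I : Set X.cell) (e φ G : X.cell → Z.cell) :
    Prop :=
  (∀ u, X.dim u ≤ n - 1 → G u = e u) ∧ (∀ x ∈ I, G x = φ x) ∧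
  (∀ u, X.dim u ≤ n → Z.dim (G u) = X.dim u) ∧
  (∀ u, 0 < X.dim u → X.dim u ≤ n →
    Z.src (G u) = G (X.src u) ∧ Z.tgt (G u) = G (X.tgt u)) ∧
  (∀ k u v, X.Composable k u v → X.dim u ≤ n → G (X.comp k u v) = Z.comp k (G u) (G v)) ∧
  (∀ u, X.dim u < n → G (X.ide u) = Z.ide (G u))

theorem FreeAtLevel.eq_self_of_isFreeExtension {X : OmegaCat} (hX : X.Laws) {n : ℕ}
    {I : Set X.cell} (hfree : FreeAtLevel X n I) {G : X.cell → X.cell}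
    (hG : IsFreeExtension X X n I id id G) {u : X.cell} (hu : X.dim u ≤ n) : G u = u := by
  have hext : ExtendsAt X X (n - 1) id :=
    ⟨fun _ _ _ _ h => h, fun u hu => ⟨u, hu, rfl⟩, fun _ _ => rfl,
      fun _ _ _ => ⟨rfl, rfl⟩, fun _ _ => rfl, fun _ _ _ _ _ => rfl⟩
  obtain ⟨G₀, -, huniq⟩ := hfree.2 X hX id hext id fun x hx => ⟨hfree.1 x hx, rfl, rfl⟩
  have hid : IsFreeExtension X X n I id id id :=
    ⟨fun _ _ => rfl, fun _ _ => rfl, fun _ _ => rfl, fun _ _ _ => ⟨rfl, rfl⟩,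
      fun _ _ _ _ _ => rfl, fun _ _ => rfl⟩
  exact (huniq G hG u hu).trans (huniq id hid u hu).symm

namespace OmegaCat.restrict

variable {X : OmegaCat} {P : X.cell → Prop} (hP : X.IsSubOmegaCat P)

open Classical in
noncomputable def incl (z₀ : (X.restrict hP).cell) (a : X.cell) : (X.restrict hP).cell :=
  if h : P a then ⟨a, h⟩ else z₀

theorem incl_of_mem (z₀ : (X.restrict hP).cell) {a : X.cell} (h : P a) :
    incl hP z₀ a = ⟨a, h⟩ :=
  dif_pos h

theorem extendsAt_incl {m : ℕ} (low : ∀ u, X.dim u ≤ m → P u)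
    (z₀ : (X.restrict hP).cell) :
    ExtendsAt (X.restrict hP) X m (incl hP z₀) := by
  refine ⟨fun a b ha hb hab => ?_, fun z hz => ⟨z.1, hz, incl_of_mem hP z₀ z.2⟩,
    fun a ha => ?_, fun a _ ha => ?_, fun a ha => ?_, fun k a b hab ha => ?_⟩
  · rw [incl_of_mem hP z₀ (low a ha), incl_of_mem hP z₀ (low b hb)] at hab
    exact congrArg Subtype.val hab
  · rw [incl_of_mem hP z₀ (low a ha)]
  · rw [incl_of_mem hP z₀ (low a ha), incl_of_mem hP z₀ (hP.src_mem a (low a ha)),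
      incl_of_mem hP z₀ (hP.tgt_mem a (low a ha))]
    exact ⟨rfl, rfl⟩
  · rw [incl_of_mem hP z₀ (low a ha.le), incl_of_mem hP z₀ (hP.ide_mem a (low a ha.le))]
  · have hb := low b (hab.1 ▸ ha)
    rw [incl_of_mem hP z₀ (low a ha), incl_of_mem hP z₀ hb,
      incl_of_mem hP z₀ (hP.comp_mem k a b hab (low a ha) hb)]
    exact ext hP (val_comp hP (z := ⟨a, low a ha⟩) (w := ⟨b, hb⟩) hab)

end OmegaCat.restrict

open OmegaCat in
theorem FreeAtLevel.induction_of_isSubOmegaCat {X : OmegaCat} (hX : X.Laws) {n : ℕ}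
    {I : Set X.cell} (hfree : FreeAtLevel X n I) {P : X.cell → Prop} (hP : X.IsSubOmegaCat P)
    (low : ∀ u, X.dim u ≤ n - 1 → P u) (gen : ∀ x ∈ I, P x) {u : X.cell}
    (hu : X.dim u ≤ n) :
    P u := by
  let E := restrict.incl hP ⟨X.srcAt 0 u, low _ (by rw [hX.dim_srcAt (Nat.zero_le _)]; omega)⟩
  have hE : ∀ a (h : P a), E a = ⟨a, h⟩ := fun a h => restrict.incl_of_mem hP _ h
  have hgen : ∀ x ∈ I, (X.restrict hP).dim (E x) = n ∧
      (X.restrict hP).src (E x) = E (X.src x) ∧ (X.restrict hP).tgt (E x) = E (X.tgt x) := by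
    intro x hx
    rw [hE x (gen x hx), hE _ (hP.src_mem x (gen x hx)), hE _ (hP.tgt_mem x (gen x hx))]
    exact ⟨hfree.1 x hx, rfl, rfl⟩
  obtain ⟨G, ⟨hGlow, hGgen, hGdim, hGbd, hGcomp, hGide⟩, -⟩ :=
    hfree.2 _ (hX.restrict hP) E (restrict.extendsAt_incl hP low _) E hgen
  have hG : IsFreeExtension X X n I id id fun a => (G a).1 := by
    refine ⟨fun a ha => ?_, fun x hx => ?_, hGdim,
      fun a h0 ha => ⟨congrArg Subtype.val (hGbd a h0 ha).1,
        congrArg Subtype.val (hGbd a h0 ha).2⟩,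
      fun k a b hab ha => ?_, fun a ha => congrArg Subtype.val (hGide a ha)⟩ <;> beta_reduce
    · rw [hGlow a ha, hE a (low a ha)]; rfl
    · rw [hGgen x hx, hE x (gen x hx)]; rfl
    · rw [hGcomp k a b hab ha]
      exact restrict.val_comp hP
        ((restrict.composable_iff hP).mp (Composable.map hX hGdim hGbd hab ha))
  exact hfree.eq_self_of_isFreeExtension hX hG hu ▸ (G u).2

open OmegaCat in
theorem FreeAtLevel.induction {X : OmegaCat} (hX : X.Laws) {n : ℕ} {I : Set X.cell}
    (hfree : FreeAtLevel X n I) (P : X.cell → Prop)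
    (low : ∀ u, X.dim u ≤ n - 1 → P u) (gen : ∀ x ∈ I, P x)
    (ide : ∀ u, P u → P (X.ide u))
    (comp : ∀ k u v, X.Composable k u v → P u → P v → P (X.comp k u v))
    {u : X.cell} (hu : X.dim u ≤ n) : P u := by
  -- unlike `P`, this predicate is closed under taking faces
  let Q : X.cell → Prop := fun u => ∀ w, Relation.ReflTransGen X.IsFace u w → P w
  have hQ : X.IsSubOmegaCat Q :=
    { src_mem := fun u hu w hw => hu w (hw.head (Or.inl rfl))
      tgt_mem := fun u hu w hw => hu w (hw.head (Or.inr rfl))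
      ide_mem := fun u hu w hw => by
        rcases hX.reflTransGen_isFace_ide hw with rfl | hw
        exacts [ide u (hu u .refl), hu w hw]
      comp_mem := fun k u v h hu hv w hw => by
        rcases hX.reflTransGen_isFace_comp h hw with hw | hw | ⟨u', v', hu', hv', hc, rfl⟩
        exacts [hu w hw, hv w hw, comp k u' v' hc (hu u' hu') (hv v' hv')] }
  refine hfree.induction_of_isSubOmegaCat hX hQ (fun a ha w hw => ?_) (fun x hx w hw => ?_) hu
    u .refl
  · rcases hX.eq_or_dim_lt_of_reflTransGen_isFace hw with rfl | hd
    exacts [low w ha, low w (by omega)]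
  · rcases hX.eq_or_dim_lt_of_reflTransGen_isFace hw with rfl | hd
    exacts [gen w hx, low w (by have := hfree.1 x hx; omega)]

/-- The whiskering axioms only prescribe the `(n-1)`-boundary of `a ▫_r v`; that its target
is `a` is proved by induction over `A[I]`. -/
def TgtRepEq (X : OmegaCat) (n : ℕ) {I : Set X.cell} (D : CellOcc X n I)
    (rep : X.cell → ℕ → X.cell → X.cell) (a : X.cell) : Prop :=
  ∀ r v, r ∈ D.oI a → X.dim v = n + 1 → X.tgt v = D.oF a r → X.tgt (rep a r v) = a

section Whiskering

open OmegaCat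

variable {X : OmegaCat} {n : ℕ} {I : Set X.cell} {D : CellOcc X n I}
  {rep : X.cell → ℕ → X.cell → X.cell}

theorem wdef_of_tgt_eq (hX : X.Laws) (hn : 1 ≤ n) (hI : ∀ x ∈ I, X.dim x = n) {a v : X.cell}
    {r : ℕ} (ha : X.dim a = n) (hr : r ∈ D.oI a) (hv : X.dim v = n + 1)
    (htv : X.tgt v = D.oF a r) : WDef X n D a r v := by
  have hx : X.dim (X.tgt v) = n - 1 + 1 := by rw [htv, hI _ (D.occ_mem a r hr)]; omega
  refine ⟨ha, hr, by omega, ?_, ?_⟩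
  · rw [← hX.srcAt_tgtAt (k := n) (by omega) (by omega), tgtAt_of_dim_eq_succ hv,
      srcAt_of_dim_eq_succ hx, htv]
  · rw [← hX.tgtAt_tgtAt (k := n) (by omega) (by omega), tgtAt_of_dim_eq_succ hv,
      tgtAt_of_dim_eq_succ hx, htv]

theorem rep_comp_of_mem_left (hX : X.Laws) (hn : 1 ≤ n) (hI : ∀ x ∈ I, X.dim x = n)
    (hrep : IsWhisk X n D rep) {k r : ℕ} {b c v : X.cell} (hk : k < n) (hb : X.dim b = n)
    (hbc : X.Composable k b c) (hr : r ∈ D.oI b) (hv : X.dim v = n + 1)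
    (htv : X.tgt v = D.oF b r) :
    rep (X.comp k b c) r v = X.comp k (rep b r v) (X.ide c) := by
  obtain ⟨-, hocc, hoF, -⟩ := D.occ_comp k b c hk hb hbc
  have hwd : WDef X n D (X.comp k b c) r v :=
    wdef_of_tgt_eq hX hn hI (by rw [hX.dim_comp k b c hbc, hb]) (by simp [hocc, hr]) hv
      (by rw [htv, hoF r hr])
  rw [(hrep.2.2 k b c r v hk hb hbc hwd).1 hr, wcomp_of_dim_succ_eq_left]
  rw [(hrep.1 b r v (wdef_of_tgt_eq hX hn hI hb hr hv htv)).1, hv, ← hbc.1, hb]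

theorem rep_comp_of_mem_right (hX : X.Laws) (hn : 1 ≤ n) (hI : ∀ x ∈ I, X.dim x = n)
    (hrep : IsWhisk X n D rep) {k r : ℕ} {b c v : X.cell} (hk : k < n) (hb : X.dim b = n)
    (hbc : X.Composable k b c) (hr : r ∈ D.oI c) (hv : X.dim v = n + 1)
    (htv : X.tgt v = D.oF c r) :
    rep (X.comp k b c) r v = X.comp k (X.ide b) (rep c r v) := by
  obtain ⟨-, hocc, -, hoF⟩ := D.occ_comp k b c hk hb hbc
  have hc : X.dim c = n := hbc.1 ▸ hb
  have hwd : WDef X n D (X.comp k b c) r v :=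
    wdef_of_tgt_eq hX hn hI (by rw [hX.dim_comp k b c hbc, hb]) (by simp [hocc, hr]) hv
      (by rw [htv, hoF r hr])
  rw [(hrep.2.2 k b c r v hk hb hbc hwd).2 hr, wcomp_of_dim_succ_eq_right]
  rw [(hrep.1 c r v (wdef_of_tgt_eq hX hn hI hc hr hv htv)).1, hv, hb]

theorem tgtRepEq_of_mem (hX : X.Laws) (hn : 1 ≤ n) (hI : ∀ x ∈ I, X.dim x = n)
    (hrep : IsWhisk X n D rep) {x : X.cell} (hx : x ∈ I) : TgtRepEq X n D rep x := by
  intro r v hr hv htv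
  obtain ⟨r', hocc, hoF⟩ := D.occ_ind x hx
  obtain rfl : r = r' := Finset.mem_singleton.mp (hocc ▸ hr)
  rw [hrep.2.1 x r v hx hocc (wdef_of_tgt_eq hX hn hI (hI x hx) hr hv htv), htv, hoF]

theorem tgtRepEq_comp (hX : X.Laws) (hn : 1 ≤ n) (hI : ∀ x ∈ I, X.dim x = n)
    (hrep : IsWhisk X n D rep) {k : ℕ} {b c : X.cell} (hk : k < n) (hb : X.dim b = n)
    (hbc : X.Composable k b c) (ihb : TgtRepEq X n D rep b) (ihc : TgtRepEq X n D rep c) :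
    TgtRepEq X n D rep (X.comp k b c) := by
  intro r v hr hv htv
  obtain ⟨-, hocc, hoFb, hoFc⟩ := D.occ_comp k b c hk hb hbc
  have hc : X.dim c = n := hbc.1 ▸ hb
  rcases Finset.mem_union.mp (hocc ▸ hr) with hr | hr
  · have htv' := htv.trans (hoFb r hr)
    rw [rep_comp_of_mem_left hX hn hI hrep hk hb hbc hr hv htv']
    exact (hX.tgt_comp_ide hbc (by rw [(hrep.1 b r v (wdef_of_tgt_eq hX hn hI hb hr hv htv')).1,
      hv, hb]) (ihb r v hr hv htv')).2
  · have htv' := htv.trans (hoFc r hr)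
    rw [rep_comp_of_mem_right hX hn hI hrep hk hb hbc hr hv htv']
    exact (hX.tgt_ide_comp hbc (by rw [(hrep.1 c r v (wdef_of_tgt_eq hX hn hI hc hr hv htv')).1,
      hv, hc]) (ihc r v hr hv htv')).2

theorem tgtRepEq_of_dim_eq (hX : X.Laws) (hn : 1 ≤ n) (hfree : FreeAtLevel X n I)
    (hrep : IsWhisk X n D rep) {a : X.cell} (ha : X.dim a = n) : TgtRepEq X n D rep a := by
  have hI := hfree.1
  refine hfree.induction hX (fun a => X.dim a = n → TgtRepEq X n D rep a)
    (fun u hu hu' => by omega) (fun x hx _ => tgtRepEq_of_mem hX hn hI hrep hx)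
    (fun u _ hu r v hr => ?_) (fun k u v huv hu hv hd => ?_) ha.le ha
  · rw [hX.dim_ide] at hu
    rw [D.occ_ide u (by omega)] at hr
    exact absurd hr (Finset.notMem_empty r)
  · rw [hX.dim_comp k u v huv] at hd
    exact tgtRepEq_comp hX hn hI hrep (by have := huv.2.1; omega) hd huv (hu hd) (hv (huv.1 ▸ hd))

theorem PDef.dim_rep_and_composable (hX : X.Laws) (hn : 1 ≤ n) (hfree : FreeAtLevel X n I)
    (hrep : IsWhisk X n D rep) {v' v'' : X.cell} {r : ℕ} (hp : PDef X n D v' r v'') :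
    X.dim (rep (X.src v') r v'') = n + 1 ∧ X.Composable n v' (rep (X.src v') r v'') := by
  obtain ⟨hd', hd'', hr, htv⟩ := hp
  have hda : X.dim (X.src v') = n := by rw [hX.dim_src v' (by omega), hd']; omega
  have hdw : X.dim (rep (X.src v') r v'') = n + 1 :=
    (hrep.1 _ _ _ (wdef_of_tgt_eq hX hn hfree.1 hda hr hd'' htv)).1.trans hd''
  refine ⟨hdw, hd'.trans hdw.symm, by omega, ?_⟩
  rw [srcAt_of_dim_eq_succ hd', tgtAt_of_dim_eq_succ hdw,
    tgtRepEq_of_dim_eq hX hn hfree hrep hda r v'' hr hd'' htv]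

theorem comp_pcomp (hX : X.Laws) (hn : 1 ≤ n) (hfree : FreeAtLevel X n I)
    (hrep : IsWhisk X n D rep) {k r : ℕ} {u v' v'' : X.cell} (hk : k ≤ n)
    (hp : PDef X n D v' r v'') (h : X.Composable k u (pcomp X n rep v' r v'')) :
    X.comp k u (pcomp X n rep v' r v'') = pcomp X n rep (X.comp k u v') r v'' := by
  obtain ⟨hdw, hw⟩ := hp.dim_rep_and_composable hX hn hfree hrep
  obtain ⟨hd', hd'', hr, htv⟩ := hp
  unfold pcomp at h ⊢
  have hdu : X.dim u = n + 1 := h.1.trans ((hX.dim_comp n _ _ hw).trans hd')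
  rcases hk.lt_or_eq with hk | rfl
  · have huv' : X.Composable k u v' :=
      ⟨hdu.trans hd'.symm, by omega, h.2.2.trans (hX.tgtAt_comp_of_le hw hk.le)⟩
    obtain ⟨hu, hu_eq⟩ := hX.comp_ide_src hdu
    have hsu : X.dim (X.src u) = n := by rw [hX.dim_src u (by omega), hdu]; omega
    rw [(hX.bd_comp k u v' huv' (by omega)).1, rep_comp_of_mem_right hX hn hfree.1 hrep hk hsu
      (hX.composable_src huv' (by omega)) hr hd'' htv]
    calc X.comp k u (X.comp n v' (rep (X.src v') r v''))
        = X.comp k (X.comp n u (X.ide (X.src u))) (X.comp n v' (rep (X.src v') r v'')) := by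
          rw [hu_eq]
      _ = _ := hX.exch k n _ _ _ _ hk hu hw (by rwa [hu_eq])
  · have huv' : X.Composable k u v' :=
      ⟨hdu.trans hd'.symm, by omega, h.2.2.trans (hX.tgtAt_comp hw)⟩
    rw [(hX.bd_comp_top k u v' huv' hdu.symm).1]
    exact (hX.comp_assoc k u v' _ huv' hw).symm

theorem pcomp_comp (hX : X.Laws) (hn : 1 ≤ n) (hfree : FreeAtLevel X n I)
    (hrep : IsWhisk X n D rep) {k r : ℕ} {u' u'' v : X.cell} (hk : k < n)
    (hp : PDef X n D u' r u'') (h : X.Composable k (pcomp X n rep u' r u'') v) :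
    X.comp k (pcomp X n rep u' r u'') v = pcomp X n rep (X.comp k u' v) r u'' := by
  obtain ⟨hdw, hw⟩ := hp.dim_rep_and_composable hX hn hfree hrep
  obtain ⟨hd', hd'', hr, htv⟩ := hp
  unfold pcomp at h ⊢
  have hdv : X.dim v = n + 1 := h.1.symm.trans ((hX.dim_comp n _ _ hw).trans hd')
  have hu'v : X.Composable k u' v :=
    ⟨hd'.trans hdv.symm, by omega, (hX.srcAt_eq_of_composable hw hk).trans
      ((hX.srcAt_comp_of_le hw hk.le).symm.trans h.2.2)⟩
  obtain ⟨hv, hv_eq⟩ := hX.comp_ide_src hdv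
  have hsu' : X.dim (X.src u') = n := by rw [hX.dim_src u' (by omega), hd']; omega
  rw [(hX.bd_comp k u' v hu'v (by omega)).1, rep_comp_of_mem_left hX hn hfree.1 hrep hk hsu'
    (hX.composable_src hu'v (by omega)) hr hd'' htv]
  calc X.comp k (X.comp n u' (rep (X.src u') r u'')) v
      = X.comp k (X.comp n u' (rep (X.src u') r u'')) (X.comp n v (X.ide (X.src v))) := by
        rw [hv_eq]
    _ = _ := hX.exch k n _ _ _ _ hk hw hv (by rwa [hv_eq])

end Whiskering

/-- Interaction of the ω-categorical compositions with placed composition of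
`(n+1)`-cells, in an ω-category with `X_n = A[I]` free:
(1) `u •_k (v' ∘_r v'') = (u •_k v') ∘_r v''` for `k ≤ n`;
(2) `(u' ∘_r u'') •_k v = (u' •_k v) ∘_r u''` for `k < n`;
whenever the left-hand sides are defined. -/
theorem stmt16 (X : OmegaCat) (hX : X.Laws) (n : ℕ) (hn : 1 ≤ n)
    (I : Set X.cell) (hfree : FreeAtLevel X n I) (D : CellOcc X n I)
    (rep : X.cell → ℕ → X.cell → X.cell) (hrep : IsWhisk X n D rep) :
    (∀ k u v' v'' r, k ≤ n → PDef X n D v' r v'' →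
      X.Composable k u (pcomp X n rep v' r v'') →
      X.comp k u (pcomp X n rep v' r v'') =
        pcomp X n rep (X.comp k u v') r v'') ∧
    (∀ k u' u'' v r, k < n → PDef X n D u' r u'' →
      X.Composable k (pcomp X n rep u' r u'') v →
      X.comp k (pcomp X n rep u' r u'') v =
        pcomp X n rep (X.comp k u' v) r u'') :=
  ⟨fun _ _ _ _ _ hk hp h => comp_pcomp hX hn hfree hrep hk hp h,
    fun _ _ _ _ _ hk hp h => pcomp_comp hX hn hfree hrep hk hp h⟩
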